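/- Let G be a countably based profinite group with filtration {G_n}, and let K ≤ H ≤ G be closed subgroups. If either K has strong Hausdorff dimension in H (with respect to the induced filtration H_n = H ∩ G_n) or H has strong Hausdorff dimension in G, then hdim_G(K) = hdim_G(H) · hdim_H(K). -/

import Mathlib

open Filter Topology

noncomputable section

/-- the ratio `log|K G_n : G_n| / log|G : G_n| = log|K : K ∩ G_n| / log|G : G_n|` -/
def dimRatio {G : Type*} [Group G] (F : ℕ → Subgroup G) (K : Subgroup G) (n : ℕ) : ℝ :=
  Real.log ((F n).relIndex K) / Real.log ((F n).index)

/-- the Hausdorff dimension of `K` in `G` with respect to the filtration `F`: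
`liminf_n log|K G_n : G_n| / log|G : G_n|` -/
def hdimOf {G : Type*} [Group G] (F : ℕ → Subgroup G) (K : Subgroup G) : ℝ :=
  Filter.liminf (dimRatio F K) Filter.atTop

/-- `K` has strong Hausdorff dimension: the defining lim inf is a limit -/
def HasStrongHdim {G : Type*} [Group G] (F : ℕ → Subgroup G) (K : Subgroup G) : Prop :=
  Filter.Tendsto (dimRatio F K) Filter.atTop (𝓝 (hdimOf F K))

/-! Since `K ∩ H_n = K ∩ G_n`, at every level the ratio for `K` in `G` is the ratio for `H` in `G`
times the ratio for `K` in `H`, all three lying in `[0, 1]`. The lim inf of a product of bounded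
nonnegative sequences is the product of the lim infs as soon as one factor converges. -/

section LiminfMul

variable {α : Type*} {f : Filter α} [f.NeBot] {u v : α → ℝ}

theorem liminf_mul_of_tendsto_left {a : ℝ} (hu : Tendsto u f (𝓝 a)) (hu₀ : 0 ≤ᶠ[f] u)
    (hv₀ : 0 ≤ᶠ[f] v) (hv : IsBoundedUnder (· ≤ ·) f v) :
    liminf (fun x => u x * v x) f = a * liminf v f := by
  have hub : IsBoundedUnder (· ≤ ·) f u := hu.isBoundedUnder_le
  apply le_antisymm
  · simpa only [hu.limsup_eq, Pi.mul_def] using liminf_mul_le hu₀ hub hv₀ hv.isCoboundedUnder_ge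
  · simpa only [hu.liminf_eq, Pi.mul_def] using le_liminf_mul hu₀ hub hv₀ hv.isCoboundedUnder_ge

theorem liminf_mul_of_tendsto_right {b : ℝ} (hv : Tendsto v f (𝓝 b)) (hu₀ : 0 ≤ᶠ[f] u)
    (hv₀ : 0 ≤ᶠ[f] v) (hu : IsBoundedUnder (· ≤ ·) f u) :
    liminf (fun x => u x * v x) f = liminf u f * b := by
  simpa only [mul_comm] using liminf_mul_of_tendsto_left hv hv₀ hu₀ hu

end LiminfMul

section DimRatio

variable {G : Type*} [Group G] (F : ℕ → Subgroup G) (n : ℕ) [(F n).FiniteIndex]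

theorem relIndex_ne_zero_of_finiteIndex (K : Subgroup G) : (F n).relIndex K ≠ 0 :=
  have := (F n).isFiniteRelIndex_of_finiteIndex (K := K)
  Subgroup.relIndex_ne_zero

theorem dimRatio_mem_Icc (K : Subgroup G) : dimRatio F K n ∈ Set.Icc 0 1 := by
  have hK : (F n).relIndex K ≠ 0 := relIndex_ne_zero_of_finiteIndex F n K
  have hKG : ((F n).relIndex K : ℝ) ≤ (F n).index := by
    have := (F n).relIndex_le_of_le_right le_top (relIndex_ne_zero_of_finiteIndex F n ⊤) (K := K)
    rw [Subgroup.relIndex_top_right] at this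
    exact_mod_cast this
  have hK₁ : (1 : ℝ) ≤ (F n).relIndex K := by exact_mod_cast Nat.one_le_iff_ne_zero.2 hK
  have hlogG : 0 ≤ Real.log (F n).index := Real.log_nonneg (hK₁.trans hKG)
  exact ⟨div_nonneg (Real.log_nonneg hK₁) hlogG,
    div_le_one_of_le₀ (Real.log_le_log (by linarith) hKG) hlogG⟩

theorem dimRatio_eq_mul {H K : Subgroup G} (hKH : K ≤ H) :
    dimRatio F K n =
      dimRatio F H n * dimRatio (fun n => (F n).subgroupOf H) (K.subgroupOf H) n := by
  have hinduced : dimRatio (fun n => (F n).subgroupOf H) (K.subgroupOf H) n =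
      Real.log ((F n).relIndex K) / Real.log ((F n).relIndex H) := by
    simp only [dimRatio, Subgroup.relIndex_subgroupOf hKH]
    rfl
  rw [hinduced]
  unfold dimRatio
  by_cases hHF : H ≤ F n
  · simp [Subgroup.relIndex_eq_one.2 hHF, Subgroup.relIndex_eq_one.2 (hKH.trans hHF)]
  · have hH : 1 < (F n).relIndex H :=
      lt_of_le_of_ne (Nat.one_le_iff_ne_zero.2 (relIndex_ne_zero_of_finiteIndex F n H)) (Ne.symm (mt Subgroup.relIndex_eq_one.1 hHF))
    have hlogH : Real.log ((F n).relIndex H) ≠ 0 := (Real.log_pos (by exact_mod_cast hH)).ne'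
    rw [mul_comm, div_mul_div_cancel₀ hlogH]

end DimRatio

theorem stmt2_general {G : Type*} [Group G] [TopologicalSpace G] [IsTopologicalGroup G]
    [CompactSpace G]
    (F : ℕ → Subgroup G) (hopen : ∀ n, IsOpen ((F n : Set G)))
    (H K : Subgroup G) (hKH : K ≤ H)
    (hstrong : HasStrongHdim (fun n => (F n).subgroupOf H) (K.subgroupOf H) ∨
      HasStrongHdim F H) :
    hdimOf F K = hdimOf F H * hdimOf (fun n => (F n).subgroupOf H) (K.subgroupOf H) := by
  have : ∀ n, (F n).FiniteIndex := fun n =>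
    have := (F n).quotient_finite_of_isOpen (hopen n)
    Subgroup.finiteIndex_of_finite_quotient
  set u := dimRatio F H
  set v := dimRatio (fun n => (F n).subgroupOf H) (K.subgroupOf H)
  have hu₀ : 0 ≤ᶠ[atTop] u := .of_forall fun n => (dimRatio_mem_Icc F n H).1
  have hv₀ : 0 ≤ᶠ[atTop] v := .of_forall fun n => (dimRatio_mem_Icc _ n _).1
  have hu₁ : IsBoundedUnder (· ≤ ·) atTop u :=
    isBoundedUnder_of ⟨1, fun n => (dimRatio_mem_Icc F n H).2⟩
  have hv₁ : IsBoundedUnder (· ≤ ·) atTop v :=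
    isBoundedUnder_of ⟨1, fun n => (dimRatio_mem_Icc _ n _).2⟩
  have hfactor : dimRatio F K = fun n => u n * v n := funext fun n => dimRatio_eq_mul F n hKH
  rw [hdimOf, hfactor]
  rcases hstrong with hv | hu
  · exact liminf_mul_of_tendsto_right hv hu₀ hv₀ hu₁
  · exact liminf_mul_of_tendsto_left hu hu₀ hv₀ hv₁

/-- Let `G` be a countably based profinite group with a filtration `{G_n}` of
open normal subgroups with trivial intersection, and let `K ≤ H ≤ G` be closed subgroups.
If either `K` has strong Hausdorff dimension in `H` (with respect to the induced filtration
`H_n = H ∩ G_n`) or `H` has strong Hausdorff dimension in `G`, then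
`hdim_G(K) = hdim_G(H) · hdim_H(K)`. -/
theorem stmt2 {G : Type*} [Group G] [TopologicalSpace G] [IsTopologicalGroup G]
    [CompactSpace G] [TotallyDisconnectedSpace G]
    (F : ℕ → Subgroup G) (hopen : ∀ n, IsOpen ((F n : Set G)))
    (hnormal : ∀ n, (F n).Normal) (hanti : Antitone F) (hinter : ⨅ n, F n = ⊥)
    (H K : Subgroup G) (hKH : K ≤ H)
    (hHcl : IsClosed (H : Set G)) (hKcl : IsClosed (K : Set G))
    (hstrong : HasStrongHdim (fun n => (F n).subgroupOf H) (K.subgroupOf H) ∨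
      HasStrongHdim F H) :
    hdimOf F K = hdimOf F H * hdimOf (fun n => (F n).subgroupOf H) (K.subgroupOf H) :=
  stmt2_general F hopen H K hKH hstrong

end
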